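/- Assume V is finite-dimensional and let k ≥ 1. Suppose given: a function ω : A^k → ℝ; a function ω₀ : A × V^{k−1} → ℝ such that for each fixed a ∈ A, ω₀(a, ·) is multilinear and alternating in its k−1 vector arguments; and an alternating k-form 𝛚 on V; satisfying: (2) ω₀(v₁ +ᵥ a, v₂, …, v_k) = ω₀(a, v₂, …, v_k) + 𝛚(v₁, v₂, …, v_k) for all a ∈ A and v₁, …, v_k ∈ V; and (3) for all a₀ ∈ A and v₁, …, v_k ∈ V, ω(v₁ +ᵥ a₀, …, v_k +ᵥ a₀) = Σ_{j=1}^{k} (−1)^{j+1} ω₀(a₀, v₁, …, v̂_j, …, v_k) + 𝛚(v₁, …, v_k). Then there exists a unique alternating k-form Ω on Ã such that Ω(iA(a₁), …, iA(a_k)) = ω(a₁, …, a_k) for all a₁, …, a_k ∈ A; moreover this Ω also satisfies Ω(iA(a), iV(v₂), …, iV(v_k)) = ω₀(a, v₂, …, v_k) and Ω(iV(v₁), …, iV(v_k)) = 𝛚(v₁, …, v_k). -/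
import Mathlib


open Module

variable {V : Type*} [AddCommGroup V] [Module ℝ V]
variable {A : Type*} [AddTorsor V A]

/-- The canonical immersion of the affine space `A` into its bidual
`Ã = Module.Dual ℝ (A →ᵃ[ℝ] ℝ)`, given by `iA a φ = φ a`. -/
noncomputable def iA (a : A) : Module.Dual ℝ (A →ᵃ[ℝ] ℝ) where
  toFun φ := φ a
  map_add' _ _ := rfl
  map_smul' _ _ := rfl

/-- The canonical linear immersion of the model vector space `V` into the bidual of `A`,
given by `iV v φ = φ.linear v`. -/
noncomputable def iV : V →ₗ[ℝ] Module.Dual ℝ (A →ᵃ[ℝ] ℝ) where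
  toFun v :=
    { toFun := fun φ => φ.linear v
      map_add' := fun φ ψ => by simp
      map_smul' := fun c φ => by simp }
  map_add' v w := by ext φ; simp
  map_smul' c v := by ext φ; simp

/-- The projection `j` of the bidual onto `ℝ`: evaluation at the constant affine map `1`. -/
noncomputable def jmap : Module.Dual ℝ (A →ᵃ[ℝ] ℝ) →ₗ[ℝ] ℝ where
  toFun z := z (AffineMap.const ℝ A (1 : ℝ))
  map_add' _ _ := rfl
  map_smul' _ _ := rfl

section AuxCone

set_option linter.unusedSectionVars false

variable {m : ℕ} {W : Type*} [AddCommGroup W] [Module ℝ W]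

lemma succAbove_val' {n : ℕ} (p : Fin (n+1)) (t : Fin n) :
    ((p.succAbove t : Fin (n+1)) : ℕ) = if (t:ℕ) < (p:ℕ) then (t:ℕ) else (t:ℕ)+1 := by
  rw [Fin.succAbove]
  split_ifs with h1 h2 h3
  · rfl
  · exact absurd (by simpa [Fin.lt_def] using h1) h2
  · exact absurd (by simpa [Fin.lt_def] using h3) h1
  · rfl

lemma fin_eq_iff {n : ℕ} {x y : Fin n} : x = y ↔ (x:ℕ) = (y:ℕ) := Fin.ext_iff

lemma key_sign (g : AlternatingMap ℝ W ℝ (Fin m)) :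
    ∀ (d : ℕ) (v : Fin (m+1) → W) (i l : Fin (m+1)), (l:ℕ) = (i:ℕ) + d + 1 → v i = v l →
    (-1:ℝ)^(i:ℕ) * g (v ∘ i.succAbove) + (-1:ℝ)^(l:ℕ) * g (v ∘ l.succAbove) = 0 := by
  intro d
  induction d with
  | zero =>
    intro v i l hl hv
    have he : v ∘ i.succAbove = v ∘ l.succAbove := by
      funext t
      simp only [Function.comp_apply]
      rcases lt_trichotomy (t:ℕ) (i:ℕ) with h | h | h
      · congr 1; rw [fin_eq_iff, succAbove_val', succAbove_val']; split_ifs <;> omega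
      · have h1 : i.succAbove t = l := by rw [fin_eq_iff, succAbove_val']; split_ifs <;> omega
        have h2 : l.succAbove t = i := by rw [fin_eq_iff, succAbove_val']; split_ifs <;> omega
        rw [h1, h2, hv]
      · congr 1; rw [fin_eq_iff, succAbove_val', succAbove_val']; split_ifs <;> omega
    rw [he, hl, pow_succ]
    ring
  | succ d ih =>
    intro v i l hl hv
    have hlm : (l:ℕ) ≤ m := Nat.lt_succ_iff.mp l.isLt
    obtain ⟨l₁, hl₁v⟩ : ∃ x : Fin (m+1), (x:ℕ) = (l:ℕ) - 1 := ⟨⟨_, by omega⟩, rfl⟩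
    have hil₁ : i ≠ l₁ := by rw [Ne, fin_eq_iff]; omega
    have hil : i ≠ l := by rw [Ne, fin_eq_iff]; omega
    have hl₁l : l₁ ≠ l := by rw [Ne, fin_eq_iff]; omega
    set v' : Fin (m+1) → W := v ∘ (Equiv.swap l₁ l) with hv'
    have hv'i : v' i = v i := by
      simp only [hv', Function.comp_apply, Equiv.swap_apply_of_ne_of_ne hil₁ hil]
    have hv'l₁ : v' l₁ = v l := by
      simp only [hv', Function.comp_apply, Equiv.swap_apply_left]
    have key := ih v' i l₁ (by omega) (by rw [hv'i, hv'l₁, hv])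
    have c1 : v' ∘ l₁.succAbove = v ∘ l.succAbove := by
      funext t
      simp only [hv', Function.comp_apply]
      rcases lt_trichotomy (t:ℕ) ((l:ℕ)-1) with h | h | h
      · have h1 : l₁.succAbove t ≠ l₁ := by
          rw [Ne, fin_eq_iff, succAbove_val']; split_ifs <;> omega
        have h2 : l₁.succAbove t ≠ l := by
          rw [Ne, fin_eq_iff, succAbove_val']; split_ifs <;> omega
        rw [Equiv.swap_apply_of_ne_of_ne h1 h2]
        congr 1; rw [fin_eq_iff, succAbove_val', succAbove_val']; split_ifs <;> omega
      · have h1 : l₁.succAbove t = l := by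
          rw [fin_eq_iff, succAbove_val']; split_ifs <;> omega
        have h2 : l.succAbove t = l₁ := by
          rw [fin_eq_iff, succAbove_val']; split_ifs <;> omega
        rw [h1, Equiv.swap_apply_right, h2]
      · have h1 : l₁.succAbove t ≠ l₁ := by
          rw [Ne, fin_eq_iff, succAbove_val']; split_ifs <;> omega
        have h2 : l₁.succAbove t ≠ l := by
          rw [Ne, fin_eq_iff, succAbove_val']; split_ifs <;> omega
        rw [Equiv.swap_apply_of_ne_of_ne h1 h2]
        congr 1; rw [fin_eq_iff, succAbove_val', succAbove_val']; split_ifs <;> omega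
    obtain ⟨t₁, ht₁v⟩ : ∃ x : Fin m, (x:ℕ) = (l:ℕ) - 2 := ⟨⟨_, by omega⟩, rfl⟩
    obtain ⟨t₂, ht₂v⟩ : ∃ x : Fin m, (x:ℕ) = (l:ℕ) - 1 := ⟨⟨_, by omega⟩, rfl⟩
    have ht12 : t₁ ≠ t₂ := by rw [Ne, fin_eq_iff]; omega
    have c2 : v' ∘ i.succAbove = (v ∘ i.succAbove) ∘ (Equiv.swap t₁ t₂) := by
      funext t
      simp only [hv', Function.comp_apply]
      rcases eq_or_ne t t₁ with ht | h1
      · subst ht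
        rw [Equiv.swap_apply_left]
        have e1 : i.succAbove t = l₁ := by
          rw [fin_eq_iff, succAbove_val']; split_ifs <;> omega
        have e2 : i.succAbove t₂ = l := by
          rw [fin_eq_iff, succAbove_val']; split_ifs <;> omega
        rw [e1, Equiv.swap_apply_left, e2]
      rcases eq_or_ne t t₂ with ht | h2
      · subst ht
        rw [Equiv.swap_apply_right]
        have e1 : i.succAbove t = l := by
          rw [fin_eq_iff, succAbove_val']; split_ifs <;> omega
        have e2 : i.succAbove t₁ = l₁ := by
          rw [fin_eq_iff, succAbove_val']; split_ifs <;> omega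
        rw [e1, Equiv.swap_apply_right, e2]
      · rw [Equiv.swap_apply_of_ne_of_ne h1 h2]
        rw [Ne, fin_eq_iff] at h1 h2
        have e1 : i.succAbove t ≠ l₁ := by
          rw [Ne, fin_eq_iff, succAbove_val']; split_ifs <;> omega
        have e2 : i.succAbove t ≠ l := by
          rw [Ne, fin_eq_iff, succAbove_val']; split_ifs <;> omega
        rw [Equiv.swap_apply_of_ne_of_ne e1 e2]
    have hswap : g (v' ∘ i.succAbove) = - g (v ∘ i.succAbove) := by
      rw [c2]; exact g.map_swap _ ht12
    rw [c1, hswap] at key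
    have hll₁ : (l:ℕ) = (l₁:ℕ) + 1 := by omega
    rw [hll₁, pow_succ]
    nlinarith [key]

lemma zero_term (g : AlternatingMap ℝ W ℝ (Fin m)) (v : Fin (m+1) → W)
    {i l j : Fin (m+1)} (hij : i ≠ j) (hlj : l ≠ j) (hil : i ≠ l) (hv : v i = v l) :
    g (v ∘ j.succAbove) = 0 := by
  obtain ⟨i', hi'⟩ := Fin.exists_succAbove_eq hij
  obtain ⟨l', hl'⟩ := Fin.exists_succAbove_eq hlj
  refine g.map_eq_zero_of_eq _ (i := i') (j := l') ?_ ?_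
  · simp only [Function.comp_apply, hi', hl', hv]
  · rintro rfl; exact hil (hi' ▸ hl' ▸ rfl)

noncomputable def coneML (g : AlternatingMap ℝ W ℝ (Fin m)) :
    MultilinearMap ℝ (fun _ : Fin (m+1) => ℝ × W) ℝ :=
  ∑ j : Fin (m+1), ((-1:ℝ)^(j:ℕ)) • MultilinearMap.domDomCongr (j.cycleRange.symm)
    ((multilinearCurryLeftEquiv ℝ (fun _ : Fin (m+1) => ℝ × W) ℝ).symm
      ((LinearMap.fst ℝ ℝ W).smulRight
        (g.toMultilinearMap.compLinearMap (fun _ => LinearMap.snd ℝ ℝ W))))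

lemma coneML_apply (g : AlternatingMap ℝ W ℝ (Fin m)) (p : Fin (m+1) → ℝ × W) :
    coneML g p =
      ∑ j : Fin (m+1), (-1:ℝ)^(j:ℕ) * ((p j).1 * g (fun i => (p (j.succAbove i)).2)) := by
  rw [coneML, MultilinearMap.sum_apply]
  refine Finset.sum_congr rfl fun j _ => ?_
  simp [MultilinearMap.smul_apply, MultilinearMap.domDomCongr_apply,
    multilinearCurryLeftEquiv, LinearMap.uncurryLeft_apply, Fin.tail, smul_eq_mul]

/-- The "cone" alternating form on `ℝ × W`. -/
noncomputable def coneForm (g : AlternatingMap ℝ W ℝ (Fin m))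
    (b : AlternatingMap ℝ W ℝ (Fin (m+1))) :
    AlternatingMap ℝ (ℝ × W) ℝ (Fin (m+1)) where
  toMultilinearMap := coneML g + b.toMultilinearMap.compLinearMap (fun _ => LinearMap.snd ℝ ℝ W)
  map_eq_zero_of_eq' := by
    have main : ∀ (p : Fin (m+1) → ℝ × W) (i l : Fin (m+1)), p i = p l → (i:ℕ) < (l:ℕ) →
        coneML g p + b (fun k => (p k).2) = 0 := by
      intro p i l hp hil
      set v : Fin (m+1) → W := fun k => (p k).2 with hv
      have hvil : v i = v l := by simp [hv, hp]
      have hb : b v = 0 := b.map_eq_zero_of_eq _ hvil (by rw [Ne, Fin.ext_iff]; omega)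
      rw [coneML_apply, hb, add_zero]
      have hsub : ({i, l} : Finset (Fin (m+1))) ⊆ Finset.univ := Finset.subset_univ _
      rw [← Finset.sum_subset hsub]
      · rw [Finset.sum_pair (by rw [Ne, Fin.ext_iff]; omega)]
        have hz := key_sign g ((l:ℕ) - (i:ℕ) - 1) v i l (by omega) hvil
        have h1 : (p l).1 = (p i).1 := by rw [hp]
        have e1 : (fun k => (p (i.succAbove k)).2) = v ∘ i.succAbove := rfl
        have e2 : (fun k => (p (l.succAbove k)).2) = v ∘ l.succAbove := rfl
        rw [e1, e2, h1]
        linear_combination (p i).1 * hz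
      · intro j _ hj
        simp only [Finset.mem_insert, Finset.mem_singleton, not_or] at hj
        have : g (fun k => (p (j.succAbove k)).2) = 0 := by
          exact zero_term g v (i := i) (l := l) (j := j) (fun h => hj.1 h.symm)
            (fun h => hj.2 h.symm) (by rw [Ne, Fin.ext_iff]; omega) hvil
        rw [this, mul_zero, mul_zero]
    intro p i l hp hil
    show coneML g p + _ = 0
    rcases lt_or_gt_of_ne (fun h : (i:ℕ) = (l:ℕ) => hil (Fin.ext h)) with h | h
    · exact main p i l hp h
    · exact main p l i hp.symm h

lemma coneForm_apply (g : AlternatingMap ℝ W ℝ (Fin m))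
    (b : AlternatingMap ℝ W ℝ (Fin (m+1))) (p : Fin (m+1) → ℝ × W) :
    coneForm g b p =
      (∑ j : Fin (m+1), (-1:ℝ)^(j:ℕ) * ((p j).1 * g (fun i => (p (j.succAbove i)).2)))
        + b (fun i => (p i).2) := by
  show (coneML g + b.toMultilinearMap.compLinearMap (fun _ => LinearMap.snd ℝ ℝ W)) p = _
  rw [MultilinearMap.add_apply, coneML_apply]
  rfl

lemma multilinear_ext_on {n : ℕ} {S : Set W}
    (hS : Submodule.span ℝ S = ⊤) (f g : MultilinearMap ℝ (fun _ : Fin n => W) ℝ)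
    (h : ∀ v : Fin n → W, (∀ i, v i ∈ S) → f v = g v) : f = g := by
  have claim : ∀ (k : ℕ) (v : Fin n → W), (∀ i : Fin n, k ≤ (i:ℕ) → v i ∈ S) → f v = g v := by
    intro k
    induction k with
    | zero => exact fun v hv => h v (fun i => hv i (Nat.zero_le _))
    | succ k ih =>
      intro v hv
      by_cases hk : k < n
      · set j : Fin n := ⟨k, hk⟩ with hj
        have hvj : v j ∈ (⊤ : Submodule ℝ W) := trivial
        rw [← hS] at hvj
        have step : ∀ x ∈ Submodule.span ℝ S,
            f (Function.update v j x) = g (Function.update v j x) := by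
          intro x hx
          induction hx using Submodule.span_induction with
          | mem x hxS =>
            apply ih
            intro i hi
            rcases eq_or_ne i j with rfl | hij
            · rw [Function.update_self]; exact hxS
            · rw [Function.update_of_ne hij]
              refine hv i ?_
              have : (i:ℕ) ≠ k := fun hc => hij (Fin.ext (by simp [hj, hc]))
              omega
          | zero => rw [f.map_update_zero, g.map_update_zero]
          | add x y _ _ hx hy => rw [f.map_update_add, g.map_update_add, hx, hy]
          | smul c x _ hx => rw [f.map_update_smul, g.map_update_smul, hx]
        have := step (v j) hvj
        rwa [Function.update_eq_self] at this
      · apply ih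
        intro i hi
        exact absurd (lt_of_le_of_lt hi i.isLt) (by omega)
  exact MultilinearMap.ext fun v =>
    claim n v (fun i hi => absurd (lt_of_le_of_lt hi i.isLt) (by omega))

end AuxCone

section Decomp
variable (a₀ : A)

set_option linter.unusedSectionVars false

/-- pullback of a linear functional on `V` to an affine map on `A`, relative to `a₀`. -/
noncomputable def Lmap : Dual ℝ V →ₗ[ℝ] (A →ᵃ[ℝ] ℝ) where
  toFun f :=
    { toFun := fun a => f (a -ᵥ a₀)
      linear := f
      map_vadd' := by intro p v; simp [vadd_vsub_assoc, map_add] }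
  map_add' f g := by ext a <;> simp
  map_smul' c f := by ext a <;> simp

variable [FiniteDimensional ℝ V]

noncomputable def wmap : Module.Dual ℝ (A →ᵃ[ℝ] ℝ) →ₗ[ℝ] V :=
  (evalEquiv ℝ V).symm.toLinearMap ∘ₗ (Lmap a₀).dualMap

lemma wmap_key (z : Module.Dual ℝ (A →ᵃ[ℝ] ℝ)) (φ : A →ᵃ[ℝ] ℝ) :
    φ.linear (wmap a₀ z) = z φ - jmap z * φ a₀ := by
  have h1 : φ.linear (wmap a₀ z) = ((Lmap a₀).dualMap z) φ.linear := by
    simp [wmap, apply_evalEquiv_symm_apply]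
  have h2 : Lmap a₀ φ.linear = φ - (φ a₀) • (AffineMap.const ℝ A (1:ℝ)) := by
    ext a
    simp [Lmap, AffineMap.linearMap_vsub]
  rw [h1, LinearMap.dualMap_apply, h2, map_sub, map_smul]
  simp [jmap, smul_eq_mul]
  ring

lemma decomp (z : Module.Dual ℝ (A →ᵃ[ℝ] ℝ)) :
    z = jmap z • iA a₀ + iV (wmap a₀ z) := by
  ext φ
  have := wmap_key a₀ z φ
  simp only [LinearMap.add_apply, LinearMap.smul_apply]
  show z φ = jmap z • (φ a₀) + φ.linear (wmap a₀ z)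
  rw [this, smul_eq_mul]; ring

lemma wmap_iA (a : A) : wmap a₀ (iA a : Module.Dual ℝ (A →ᵃ[ℝ] ℝ)) = a -ᵥ a₀ := by
  have : (Lmap a₀).dualMap (iA a) = evalEquiv ℝ V (a -ᵥ a₀) := by
    ext f
    simp [Lmap, iA]
  rw [wmap, LinearMap.comp_apply, this]
  simp only [LinearEquiv.coe_coe, evalEquiv_apply, ← evalEquiv_apply, LinearEquiv.symm_apply_apply]

lemma wmap_iV (v : V) : wmap a₀ (iV v : Module.Dual ℝ (A →ᵃ[ℝ] ℝ)) = v := by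
  have : (Lmap a₀).dualMap (iV v) = evalEquiv ℝ V v := by
    ext f
    simp [Lmap, iV]
  rw [wmap, LinearMap.comp_apply, this]
  simp only [LinearEquiv.coe_coe, evalEquiv_apply, ← evalEquiv_apply, LinearEquiv.symm_apply_apply]

lemma jmap_iA (a : A) : jmap (iA a : Module.Dual ℝ (A →ᵃ[ℝ] ℝ)) = 1 := by
  simp [jmap, iA]

lemma jmap_iV (v : V) : jmap (iV v : Module.Dual ℝ (A →ᵃ[ℝ] ℝ)) = 0 := by
  simp [jmap, iV]

lemma iA_vadd (v : V) (a : A) : (iA (v +ᵥ a) : Module.Dual ℝ (A →ᵃ[ℝ] ℝ)) = iA a + iV v := by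
  ext φ
  show φ (v +ᵥ a) = φ a + φ.linear v
  rw [AffineMap.map_vadd]
  simp [add_comm]

lemma span_iA (b₀ : A) :
    Submodule.span ℝ (Set.range (iA : A → Module.Dual ℝ (A →ᵃ[ℝ] ℝ))) = ⊤ := by
  rw [eq_top_iff]
  intro z _
  rw [decomp b₀ z]
  have h1 : (iA b₀ : Module.Dual ℝ (A →ᵃ[ℝ] ℝ)) ∈ Submodule.span ℝ (Set.range (iA : A → _)) :=
    Submodule.subset_span ⟨b₀, rfl⟩
  have h2 : (iV (wmap b₀ z) : Module.Dual ℝ (A →ᵃ[ℝ] ℝ)) ∈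
      Submodule.span ℝ (Set.range (iA : A → _)) := by
    have : (iV (wmap b₀ z) : Module.Dual ℝ (A →ᵃ[ℝ] ℝ)) = iA (wmap b₀ z +ᵥ b₀) - iA b₀ := by
      rw [iA_vadd]; abel
    rw [this]
    exact sub_mem (Submodule.subset_span ⟨_, rfl⟩) h1
  exact add_mem (Submodule.smul_mem _ _ h1) h2

end Decomp

/-- A `k`-form on the affine space `A` (given by the data `ω`, `ω₀`, `bω` satisfying the
defining conditions) is the pullback under the canonical immersion `iA` of a unique
alternating `k`-form `Ω` on the bidual `Ã`; moreover `Ω` restricts to `ω₀` and `bω`. -/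
theorem stmt14 {V : Type*} [AddCommGroup V] [Module ℝ V] {A : Type*} [AddTorsor V A]
    [FiniteDimensional ℝ V] {m : ℕ}
    (ω : (Fin (m + 1) → A) → ℝ)
    (ω₀ : A → AlternatingMap ℝ V ℝ (Fin m))
    (bω : AlternatingMap ℝ V ℝ (Fin (m + 1)))
    (h2 : ∀ (a : A) (v : Fin (m + 1) → V),
      ω₀ (v 0 +ᵥ a) (Fin.tail v) = ω₀ a (Fin.tail v) + bω v)
    (h3 : ∀ (a₀ : A) (v : Fin (m + 1) → V),
      ω (fun i => v i +ᵥ a₀) =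
        (∑ j : Fin (m + 1), (-1 : ℝ) ^ (j : ℕ) • ω₀ a₀ (v ∘ j.succAbove)) + bω v) :
    (∃! Ω : AlternatingMap ℝ (Module.Dual ℝ (A →ᵃ[ℝ] ℝ)) ℝ (Fin (m + 1)),
      ∀ a : Fin (m + 1) → A, Ω (fun i => iA (a i)) = ω a) ∧
    (∀ Ω : AlternatingMap ℝ (Module.Dual ℝ (A →ᵃ[ℝ] ℝ)) ℝ (Fin (m + 1)),
      (∀ a : Fin (m + 1) → A, Ω (fun i => iA (a i)) = ω a) →
      (∀ (a : A) (v : Fin m → V), Ω (Fin.cons (iA a) (fun i => iV (v i))) = ω₀ a v) ∧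
      (∀ v : Fin (m + 1) → V, Ω (fun i => iV (v i)) = bω v)) := by
  classical
  obtain ⟨a₀⟩ : Nonempty A := inferInstance
  set P : Module.Dual ℝ (A →ᵃ[ℝ] ℝ) →ₗ[ℝ] ℝ × V := jmap.prod (wmap a₀) with hPdef
  set Ω : AlternatingMap ℝ (Module.Dual ℝ (A →ᵃ[ℝ] ℝ)) ℝ (Fin (m + 1)) :=
    (coneForm (ω₀ a₀) bω).compLinearMap P with hΩdef
  have hP_iA : ∀ a : A, P (iA a) = (1, a -ᵥ a₀) := fun a => by
    simp [hPdef, LinearMap.prod_apply, jmap_iA, wmap_iA, Prod.ext_iff]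
  have hP_iV : ∀ v : V, P (iV v) = (0, v) := fun v => by
    simp [hPdef, LinearMap.prod_apply, jmap_iV, wmap_iV, Prod.ext_iff]
  have hΩap : ∀ p : Fin (m+1) → Module.Dual ℝ (A →ᵃ[ℝ] ℝ),
      Ω p = (∑ j : Fin (m+1), (-1:ℝ)^(j:ℕ) *
          ((P (p j)).1 * ω₀ a₀ (fun i => (P (p (j.succAbove i))).2)))
        + bω (fun i => (P (p i)).2) := by
    intro p
    rw [hΩdef, AlternatingMap.compLinearMap_apply, coneForm_apply]
  have prop1 : ∀ a : Fin (m + 1) → A, Ω (fun i => iA (a i)) = ω a := by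
    intro a
    rw [hΩap]
    have h3' := h3 a₀ (fun i => a i -ᵥ a₀)
    simp only [vsub_vadd] at h3'
    rw [show (fun i => a i) = a from rfl] at h3'
    rw [h3']
    have e0 : (fun i => (P (iA (a i))).2) = fun i => a i -ᵥ a₀ := by
      funext i; rw [hP_iA]
    have e1 : ∀ j : Fin (m+1), (fun i => (P (iA (a (j.succAbove i)))).2)
        = (fun i => a i -ᵥ a₀) ∘ j.succAbove := by
      intro j; funext i; rw [hP_iA]; rfl
    congr 1
    · refine Finset.sum_congr rfl fun j _ => ?_
      rw [hP_iA (a j), e1 j]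
      simp [smul_eq_mul]
    · exact congrArg _ e0
  have prop3 : ∀ v : Fin (m + 1) → V, Ω (fun i => iV (v i)) = bω v := by
    intro v
    rw [hΩap]
    have : ∀ j : Fin (m+1), (P (iV (v j))).1 = 0 := fun j => by rw [hP_iV]
    rw [Finset.sum_eq_zero (fun j _ => by rw [this j, zero_mul, mul_zero]), zero_add]
    congr 1
    funext i
    rw [hP_iV]
  have prop2 : ∀ (a : A) (v : Fin m → V),
      Ω (Fin.cons (iA a) (fun i => iV (v i))) = ω₀ a v := by
    intro a v
    set q : Fin (m+1) → Module.Dual ℝ (A →ᵃ[ℝ] ℝ) := Fin.cons (iA a) (fun i => iV (v i))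
      with hqdef
    show Ω q = _
    rw [hΩap]
    have hp0 : P (q 0) = (1, a -ᵥ a₀) := by
      rw [hqdef, Fin.cons_zero]; exact hP_iA a
    have hps : ∀ i : Fin m, P (q i.succ) = (0, v i) := by
      intro i; rw [hqdef, Fin.cons_succ]; exact hP_iV (v i)
    have hsum : (∑ j : Fin (m+1), (-1:ℝ)^(j:ℕ) *
        ((P (q j)).1 * ω₀ a₀ (fun i => (P (q (j.succAbove i))).2)))
        = ω₀ a₀ v := by
      rw [Finset.sum_eq_single 0]
      · rw [hp0]
        simp only [Fin.val_zero, pow_zero, one_mul]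
        have harg : (fun i => (P (q ((0:Fin (m+1)).succAbove i))).2) = v := by
          funext i
          rw [Fin.succAbove_zero, hps i]
        rw [harg]
      · intro j _ hj
        obtain ⟨j', rfl⟩ := Fin.exists_succ_eq.mpr hj
        rw [hps j']
        simp
      · intro h; exact absurd (Finset.mem_univ _) h
    rw [hsum]
    have hb : (fun i => (P (q i)).2) = Fin.cons (a -ᵥ a₀) v := by
      funext i
      refine Fin.cases ?_ ?_ i
      · rw [hp0, Fin.cons_zero]
      · intro i'; rw [hps i', Fin.cons_succ]
    rw [hb]
    have h2' := h2 a₀ (Fin.cons (a -ᵥ a₀) v)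
    rw [Fin.cons_zero, Fin.tail_cons, vsub_vadd] at h2'
    linarith [h2']
  have uniq : ∀ Ω' : AlternatingMap ℝ (Module.Dual ℝ (A →ᵃ[ℝ] ℝ)) ℝ (Fin (m + 1)),
      (∀ a : Fin (m + 1) → A, Ω' (fun i => iA (a i)) = ω a) → Ω' = Ω := by
    intro Ω' hΩ'
    have hml : Ω'.toMultilinearMap = Ω.toMultilinearMap := by
      apply multilinear_ext_on (span_iA a₀)
      intro v hv
      choose a ha using hv
      have hva : v = fun i => iA (a i) := by funext i; exact (ha i).symm
      show Ω' v = Ω v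
      rw [hva, hΩ' a, prop1 a]
    exact AlternatingMap.ext fun v => DFunLike.congr_fun hml v
  refine ⟨⟨Ω, prop1, fun Ω' h => uniq Ω' h⟩, fun Ω' h => ?_⟩
  rw [uniq Ω' h]
  exact ⟨prop2, prop3⟩
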